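/- arXiv:2512.22954 — 2 statements merged into one kernel-verified Lean document; each statement's English description precedes it below -/
import Mathlib

section
/- Let d ≥ 3 and let S ⊆ [n] be a subset that is not G-admissible for a forest G on [n], witnessed by a vertex i ∈ S with rank(N_G(i)∩([n]∖S)) < d in M(G_{[n]∖S}). Then V_S ⊆ V_{S∖{i}}, i.e., the closure of U(S) is contained in the closure of U(S∖{i}). -/
/-!
A point `p ∈ U(S)` has `p_i = 0`. The neighbour vectors `p_j`, `j ∈ N_G(i)`, cannot span `ℂ^d`:
otherwise `d` of them, indexed by neighbours outside `S`, form a basis, and non-admissibility puts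
these `d` neighbours inside the neighbourhood of one vertex `j ∉ S`; then `p_j` is orthogonal to a
basis, so `p_j = 0`, contradicting `j ∉ S`. Hence some `w ≠ 0` is orthogonal to every `p_j`, and
moving `p_i` to `t • w` gives a point of `U(S ∖ {i})` for each `t ≠ 0`. A polynomial vanishing on
this punctured line vanishes at `t = 0`, that is, at `p`.
-/

/-- `U(S)`. -/
def USet {n : ℕ} (d : ℕ) (G : SimpleGraph (Fin n)) (S : Set (Fin n)) :
    Set (Fin n × Fin d → ℂ) :=
  {p | (∀ i j : Fin n, G.Adj i j → ∑ k, p (i, k) * p (j, k) = 0) ∧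
    ∀ i : Fin n, (∀ k : Fin d, p (i, k) = 0) ↔ i ∈ S}

open Function Submodule

theorem MvPolynomial.eval_eq_zero_of_forall_ne_zero_eval_add_smul {K σ : Type*} [Field K]
    [Infinite K] (f : MvPolynomial σ K) (x y : σ → K)
    (h : ∀ t : K, t ≠ 0 → eval (x + t • y) f = 0) : eval x f = 0 := by
  set q := aeval (fun s => Polynomial.C (x s) + Polynomial.X * Polynomial.C (y s)) f
  have hq (t : K) : q.eval t = eval (x + t • y) f := by
    rw [← Polynomial.coe_aeval_eq_eval, comp_aeval_apply, ← aeval_eq_eval]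
    congr 2 with s
    simp only [map_add, map_mul, Polynomial.aeval_C, Polynomial.aeval_X, Algebra.algebraMap_self,
      RingHom.id_apply, Pi.add_apply, Pi.smul_apply, smul_eq_mul]
  have hq0 : q = 0 := q.eq_zero_of_infinite_isRoot <|
    (Set.finite_singleton 0).infinite_compl.mono fun t ht => by simpa [hq] using h t ht
  simpa [hq0] using (hq 0).symm

theorem exists_ne_zero_forall_dotProduct_eq_zero {K ι : Type*} [Field K] [Fintype ι]
    [DecidableEq ι] {W : Submodule K (ι → K)} (hW : W ≠ ⊤) :
    ∃ w ≠ 0, ∀ v ∈ W, w ⬝ᵥ v = 0 := by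
  obtain ⟨φ, hφ, hφW⟩ := exists_dual_map_eq_bot_of_lt_top hW.lt_top inferInstance
  refine ⟨(dotProductEquiv K ι).symm φ, by simpa using hφ, fun v hv => ?_⟩
  change dotProductEquiv K ι _ v = 0
  rw [LinearEquiv.apply_symm_apply]
  exact LinearMap.le_ker_iff_map.mpr hφW hv

theorem eq_zero_of_forall_dotProduct_eq_zero {K ι κ : Type*} [Field K] [Fintype ι]
    [DecidableEq ι] {v : κ → ι → K} (hv : span K (Set.range v) = ⊤) {u : ι → K}
    (hu : ∀ k, u ⬝ᵥ v k = 0) : u = 0 :=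
  (dotProductEquiv K ι).injective <| by
    rw [map_zero]
    exact LinearMap.ext_on_range hv (by simpa using hu)

variable {V ι K : Type*}

theorem curry_add_smul_uncurry_single [Semiring K] [DecidableEq V]
    {p : V × ι → K} {i : V} (hi : curry p i = 0) (t : K) (w : ι → K) :
    curry (p + t • uncurry (Pi.single i w)) = update (curry p) i (t • w) := by
  ext a k
  rcases eq_or_ne a i with rfl | ha
  · simp [show p (a, k) = 0 from congrFun hi k]
  · simp [ha]

/-- An orthogonal representation of the complement of `G` whose zero vectors sit exactly on `S`;
`U(S)` is this condition on the rows `curry p`. -/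
def IsOrthRepWithZeroSet [Semiring K] [Fintype ι] (G : SimpleGraph V) (S : Set V)
    (r : V → ι → K) : Prop :=
  (∀ a b, G.Adj a b → r a ⬝ᵥ r b = 0) ∧ ∀ a, r a = 0 ↔ a ∈ S

theorem mem_USet_iff {n d : ℕ} {G : SimpleGraph (Fin n)} {S : Set (Fin n)}
    {p : Fin n × Fin d → ℂ} : p ∈ USet d G S ↔ IsOrthRepWithZeroSet G S (curry p) := by
  simp [USet, IsOrthRepWithZeroSet, dotProduct, funext_iff]

namespace IsOrthRepWithZeroSet

variable [Fintype ι] {G : SimpleGraph V} {S : Set V} {r : V → ι → K}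

theorem span_neighborSet_ne_top [Field K] [DecidableEq ι] (hr : IsOrthRepWithZeroSet G S r)
    {i : V}
    (hcover : ∀ B ⊆ G.neighborSet i ∩ Sᶜ, B.ncard = Fintype.card ι →
      ∃ j ∉ S, B ⊆ G.neighborSet j) :
    span K (r '' G.neighborSet i) ≠ ⊤ := by
  intro htop
  obtain ⟨κ, a, ha, hspan, hli⟩ := exists_linearIndependent' K fun j : G.neighborSet i => r j
  rw [← Set.image_eq_range, htop] at hspan
  set B := Set.range (Subtype.val ∘ a)
  have hB : B ⊆ G.neighborSet i ∩ Sᶜ := by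
    rintro _ ⟨k, rfl⟩
    exact ⟨(a k).2, fun hk => hli.ne_zero k ((hr.2 _).2 hk)⟩
  have hBcard : B.ncard = Fintype.card ι := by
    rw [← Nat.card_coe_set_eq, Nat.card_range_of_injective (Subtype.val_injective.comp ha),
      ← Module.finrank_eq_nat_card_basis (Module.Basis.mk hli hspan.ge),
      Module.finrank_fintype_fun_eq_card]
  obtain ⟨j, hjS, hjB⟩ := hcover B hB hBcard
  refine hjS ((hr.2 j).1 (eq_zero_of_forall_dotProduct_eq_zero hspan fun k => ?_))
  exact hr.1 j _ (hjB ⟨k, rfl⟩)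

theorem update [CommSemiring K] [DecidableEq V] (hr : IsOrthRepWithZeroSet G S r) {i : V}
    {w : ι → K} (hw : w ≠ 0)
    (horth : ∀ j ∈ G.neighborSet i, w ⬝ᵥ r j = 0) :
    IsOrthRepWithZeroSet G (S \ {i}) (update r i w) := by
  refine ⟨fun a b hab => ?_, fun a => ?_⟩
  · rcases eq_or_ne a i with rfl | ha
    · rw [update_self, update_of_ne hab.ne.symm]; exact horth b hab
    rcases eq_or_ne b i with rfl | hb
    · rw [update_self, update_of_ne ha, dotProduct_comm]; exact horth a hab.symm
    · rw [update_of_ne ha, update_of_ne hb]; exact hr.1 a b hab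
  · rcases eq_or_ne a i with rfl | ha
    · simp [hw]
    · simp [hr.2 a, ha]

end IsOrthRepWithZeroSet

/-- `hrank` encodes `rank(N_G(i) ∩ ([n]∖S)) < d` in `M(G_{[n]∖S})`: every `d`-subset lies in a
dependent hyperplane, i.e. in a large neighbourhood. -/
theorem VS_subset_of_not_admissible_general {n d : ℕ}
    (G : SimpleGraph (Fin n))
    (S : Set (Fin n)) (i : Fin n) (hi : i ∈ S)
    (hrank : ¬ ∃ B : Set (Fin n), B ⊆ G.neighborSet i ∩ Sᶜ ∧ B.ncard = d ∧
      ∀ j ∈ Sᶜ, d ≤ (G.neighborSet j ∩ Sᶜ).ncard → ¬ B ⊆ G.neighborSet j ∩ Sᶜ) :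
    MvPolynomial.zeroLocus ℂ (MvPolynomial.vanishingIdeal ℂ (USet d G S)) ⊆
      MvPolynomial.zeroLocus ℂ (MvPolynomial.vanishingIdeal ℂ (USet d G (S \ {i}))) := by
  have hcover : ∀ B ⊆ G.neighborSet i ∩ Sᶜ, B.ncard = Fintype.card (Fin d) →
      ∃ j ∉ S, B ⊆ G.neighborSet j := by
    intro B hB hcard
    by_contra hB_uncovered
    exact hrank ⟨B, hB, by simpa using hcard, fun j hj _ hjB =>
      hB_uncovered ⟨j, hj, hjB.trans Set.inter_subset_left⟩⟩
  refine MvPolynomial.zeroLocus_anti_mono fun f hf => ?_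
  rw [MvPolynomial.mem_vanishingIdeal_iff] at hf ⊢
  intro p hp
  rw [mem_USet_iff] at hp
  obtain ⟨w, hw, horth⟩ :=
    exists_ne_zero_forall_dotProduct_eq_zero (hp.span_neighborSet_ne_top hcover)
  refine f.eval_eq_zero_of_forall_ne_zero_eval_add_smul p (uncurry (Pi.single i w))
    fun t ht => hf _ ?_
  rw [mem_USet_iff, curry_add_smul_uncurry_single ((hp.2 i).2 hi)]
  refine hp.update (smul_ne_zero ht hw) fun j hj => ?_
  rw [smul_dotProduct, horth _ (subset_span (Set.mem_image_of_mem _ hj)), smul_zero]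

/-- If a vertex `i ∈ S` witnesses non-admissibility, i.e. the set
`N_G(i) ∩ ([n]∖S)` has rank `< d` in the paving matroid `M(G_{[n]∖S})`
(no `d`-subset of it avoids all dependent hyperplanes), then the Zariski closure
of `U(S)` is contained in the Zariski closure of `U(S ∖ {i})`. -/
theorem VS_subset_of_not_admissible {n d : ℕ} (hd : 3 ≤ d)
    (G : SimpleGraph (Fin n)) (hG : G.IsAcyclic)
    (S : Set (Fin n)) (i : Fin n) (hi : i ∈ S)
    (hrank : ¬ ∃ B : Set (Fin n), B ⊆ G.neighborSet i ∩ Sᶜ ∧ B.ncard = d ∧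
      ∀ j ∈ Sᶜ, d ≤ (G.neighborSet j ∩ Sᶜ).ncard → ¬ B ⊆ G.neighborSet j ∩ Sᶜ) :
    MvPolynomial.zeroLocus ℂ (MvPolynomial.vanishingIdeal ℂ (USet d G S)) ⊆
      MvPolynomial.zeroLocus ℂ (MvPolynomial.vanishingIdeal ℂ (USet d G (S \ {i}))) :=
  VS_subset_of_not_admissible_general G S i hi hrank
end

section
/- Let G be a tree on [n] with maximum degree ≤ 3 and let d = 3. A subset S ⊆ [n] is G-admissible if and only if every vertex of S has degree exactly 3 in G and no two vertices of S are adjacent. Moreover for every such S, d(n−|S|) − |E(G_{[n]∖S})| = 2n + 1; in particular all irreducible components of OR_3(Ḡ) have the same dimension 2n + 1. -/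
/-- `S` is `G`-admissible. -/
def GAdmissible {n : ℕ} (d : ℕ) (G : SimpleGraph (Fin n)) (S : Set (Fin n)) : Prop :=
  ∀ i ∈ S, d ≤ (G.neighborSet i ∩ Sᶜ).ncard ∧
    ∀ j ∈ Sᶜ, ¬ (G.neighborSet i ∩ Sᶜ ⊆ G.neighborSet j ∩ Sᶜ)

/-- For a tree of maximum degree at most `3` and `d = 3`: a subset `S` is
admissible iff every vertex of `S` has degree exactly `3` and no two vertices of
`S` are adjacent; and every admissible `S` yields a component of dimension
`3(n - |S|) - |E(G_{[n]∖S})| = 2n + 1`. -/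
theorem binaryTree_d3_admissible {n : ℕ}
    (G : SimpleGraph (Fin n)) (hG : G.IsTree)
    (hdeg : ∀ i : Fin n, (G.neighborSet i).ncard ≤ 3) :
    (∀ S : Set (Fin n), GAdmissible 3 G S ↔
        (∀ i ∈ S, (G.neighborSet i).ncard = 3 ∧ ∀ j ∈ S, ¬ G.Adj i j)) ∧
    (∀ S : Set (Fin n), GAdmissible 3 G S →
        3 * (n - S.ncard) -
            {e : Sym2 (Fin n) | e ∈ G.edgeSet ∧ ∀ x ∈ e, x ∉ S}.ncard
          = 2 * n + 1) := by
  classical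
  have key : ∀ S : Set (Fin n), GAdmissible 3 G S →
      (∀ i ∈ S, (G.neighborSet i).ncard = 3 ∧ ∀ j ∈ S, ¬ G.Adj i j) := by
    intro S hadm i hi
    obtain ⟨h3, _⟩ := hadm i hi
    have hfin : (G.neighborSet i).Finite := Set.toFinite _
    have hle : (G.neighborSet i ∩ Sᶜ).ncard ≤ (G.neighborSet i).ncard :=
      Set.ncard_le_ncard Set.inter_subset_left hfin
    have hdeg3 : (G.neighborSet i).ncard = 3 := le_antisymm (hdeg i) (le_trans h3 hle)
    have heq : G.neighborSet i ∩ Sᶜ = G.neighborSet i :=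
      Set.eq_of_subset_of_ncard_le Set.inter_subset_left (by omega) hfin
    refine ⟨hdeg3, fun j hj hadj => ?_⟩
    have : j ∈ G.neighborSet i ∩ Sᶜ := by rw [heq]; exact hadj
    exact this.2 hj
  constructor
  · intro S
    refine ⟨key S, ?_⟩
    intro h i hi
    obtain ⟨hdeg3, hind⟩ := h i hi
    have heq : G.neighborSet i ∩ Sᶜ = G.neighborSet i := by
      ext x
      simp only [Set.mem_inter_iff, SimpleGraph.mem_neighborSet, Set.mem_compl_iff,
        and_iff_left_iff_imp]
      exact fun hx hxS => hind x hxS hx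
    refine ⟨by rw [heq, hdeg3], fun j hj hsub => ?_⟩
    rw [heq] at hsub
    -- pick two distinct neighbors of i
    have h1 : 1 < (G.neighborSet i).ncard := by omega
    obtain ⟨a, b, ha, hb, hab⟩ := (Set.one_lt_ncard_iff (Set.toFinite _)).mp h1
    have hia : G.Adj i a := ha
    have hib : G.Adj i b := hb
    have hja : G.Adj j a := (hsub ha).1
    have hjb : G.Adj j b := (hsub hb).1
    have hij : i ≠ j := fun h => hj (h ▸ hi)
    -- two distinct paths from i to j contradict acyclicity
    have hpu := SimpleGraph.isAcyclic_iff_path_unique.mp hG.IsAcyclic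
    let w1 : G.Walk i j := SimpleGraph.Walk.cons hia (SimpleGraph.Walk.cons hja.symm SimpleGraph.Walk.nil)
    let w2 : G.Walk i j := SimpleGraph.Walk.cons hib (SimpleGraph.Walk.cons hjb.symm SimpleGraph.Walk.nil)
    have hp1 : w1.IsPath := by
      simp [w1, SimpleGraph.Walk.isPath_def, hia.ne, hja.ne, hja.ne', hij]
    have hp2 : w2.IsPath := by
      simp [w2, SimpleGraph.Walk.isPath_def, hib.ne, hjb.ne, hjb.ne', hij]
    have := hpu ⟨w1, hp1⟩ ⟨w2, hp2⟩
    have hw : w1 = w2 := congrArg Subtype.val this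
    have : a = b := by
      have := congrArg SimpleGraph.Walk.support hw
      simpa [w1, w2] using this
    exact hab this
  · intro S hadm
    have hS : ∀ i ∈ S, (G.neighborSet i).ncard = 3 ∧ ∀ j ∈ S, ¬ G.Adj i j := key S hadm
    have hSfin : S.Finite := Set.toFinite S
    set Sf : Finset (Fin n) := hSfin.toFinset with hSf
    have hmemSf : ∀ i, i ∈ Sf ↔ i ∈ S := fun i => hSfin.mem_toFinset
    set B : Finset (Sym2 (Fin n)) := Sf.biUnion (fun i => G.incidenceFinset i) with hB
    have hdisj : ∀ i ∈ Sf, ∀ j ∈ Sf, i ≠ j →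
        Disjoint (G.incidenceFinset i) (G.incidenceFinset j) := by
      intro i hi j hj hij
      rw [Finset.disjoint_left]
      intro e hei hej
      rw [SimpleGraph.mem_incidenceFinset] at hei hej
      exact (hS i ((hmemSf i).mp hi)).2 j ((hmemSf j).mp hj)
        (G.adj_of_mem_incidenceSet hij hei hej)
    have hBcard : B.card = 3 * S.ncard := by
      rw [hB, Finset.card_biUnion hdisj]
      have : ∀ i ∈ Sf, (G.incidenceFinset i).card = 3 := by
        intro i hi
        rw [SimpleGraph.card_incidenceFinset_eq_degree,
          ← SimpleGraph.card_neighborSet_eq_degree, ← Set.toFinset_card,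
          ← Set.ncard_eq_toFinset_card']
        exact (hS i ((hmemSf i).mp hi)).1
      rw [Finset.sum_congr rfl this, Finset.sum_const, smul_eq_mul,
        Set.ncard_eq_toFinset_card S hSfin, mul_comm]
    have hBsub : B ⊆ G.edgeFinset := by
      intro e he
      rw [hB, Finset.mem_biUnion] at he
      obtain ⟨i, _, hei⟩ := he
      rw [SimpleGraph.mem_incidenceFinset] at hei
      exact SimpleGraph.mem_edgeFinset.mpr hei.1
    have hmemB : ∀ e ∈ G.edgeSet, (e ∈ B ↔ ∃ x ∈ e, x ∈ S) := by
      intro e he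
      rw [hB, Finset.mem_biUnion]
      constructor
      · rintro ⟨i, hi, hei⟩
        rw [SimpleGraph.mem_incidenceFinset] at hei
        exact ⟨i, hei.2, (hmemSf i).mp hi⟩
      · rintro ⟨x, hxe, hxS⟩
        refine ⟨x, (hmemSf x).mpr hxS, ?_⟩
        rw [SimpleGraph.mem_incidenceFinset]
        exact ⟨he, hxe⟩
    have hgood : {e : Sym2 (Fin n) | e ∈ G.edgeSet ∧ ∀ x ∈ e, x ∉ S}
        = ↑(G.edgeFinset \ B) := by
      ext e
      simp only [Set.mem_setOf_eq, Finset.coe_sdiff, Set.mem_diff, Finset.mem_coe,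
        SimpleGraph.mem_edgeFinset]
      constructor
      · rintro ⟨he, hx⟩
        refine ⟨he, fun hB' => ?_⟩
        obtain ⟨x, hxe, hxS⟩ := (hmemB e he).mp hB'
        exact hx x hxe hxS
      · rintro ⟨he, hnB⟩
        exact ⟨he, fun x hxe hxS => hnB ((hmemB e he).mpr ⟨x, hxe, hxS⟩)⟩
    have hE : G.edgeFinset.card = n - 1 := by
      have := hG.card_edgeFinset
      rw [Fintype.card_fin] at this
      omega
    have hn : 1 ≤ n := Fin.pos_iff_nonempty.mpr hG.isConnected.nonempty
    have hle : 3 * S.ncard ≤ n - 1 := by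
      have := Finset.card_le_card hBsub
      rwa [hBcard, hE] at this
    rw [hgood, Set.ncard_coe_finset, Finset.card_sdiff_of_subset hBsub, hBcard, hE]
    omega
end
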